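/- Let k be an upper bound on the sizes of the members of 𝓑, and let E' ⊆ 𝓑 × 𝓑 be the arc set of a Hamiltonian (directed) cycle in the body graph D_𝓑. Then Φ_{E'} represents h_𝓑 and, for every measure * ∈ {B, BA, TA, C, BC, L}, |Φ_{E'}|_* ≤ k · OPT_*(𝓑). -/

import Mathlib

open Finset

variable {V : Type*} [Fintype V] [DecidableEq V]

/-- A pure Horn CNF is a finite set of clauses `(B, v)`: body `B`, head `v`,
with `B` nonempty and `v ∉ B`. -/
def PureHorn (Φ : Finset (Finset V × V)) : Prop :=
  ∀ c ∈ Φ, c.1.Nonempty ∧ c.2 ∉ c.1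

/-- A set `W` is closed under the clauses of `Φ`. -/
def HornClosed (Φ : Finset (Finset V × V)) (W : Set V) : Prop :=
  ∀ c ∈ Φ, ↑c.1 ⊆ W → c.2 ∈ W

/-- Forward-chaining closure `F_Φ(Z)`: the smallest set containing `Z`
that is closed under the clauses of `Φ`. -/
def hornClosure (Φ : Finset (Finset V × V)) (Z : Set V) : Set V :=
  ⋂₀ {W : Set V | Z ⊆ W ∧ HornClosed Φ W}

/-- `Ψ_𝓑 = ⋀_{B ∈ 𝓑} B → (V \ B)`. -/
def keyCNF (𝓑 : Finset (Finset V)) : Finset (Finset V × V) :=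
  𝓑.biUnion fun B => (Finset.univ \ B).image fun v => (B, v)

/-- `Φ` represents the key Horn function `h_𝓑`, i.e. `Φ` is a pure Horn CNF
equivalent to `Ψ_𝓑`. -/
def Represents (𝓑 : Finset (Finset V)) (Φ : Finset (Finset V × V)) : Prop :=
  PureHorn Φ ∧ ∀ Z : Finset V, hornClosure Φ ↑Z = hornClosure (keyCNF 𝓑) ↑Z

/-- (B) number of (distinct) bodies. -/
def sizeB (Φ : Finset (Finset V × V)) : ℕ := (Φ.image Prod.fst).card
/-- (BA) body area `Σ_i |B_i|` over the distinct bodies. -/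
def sizeBA (Φ : Finset (Finset V × V)) : ℕ := ∑ B ∈ Φ.image Prod.fst, B.card
/-- (C) number of clauses `Σ_i |H_i|`. -/
def sizeC (Φ : Finset (Finset V × V)) : ℕ := Φ.card
/-- (TA) total area `Σ_i (|B_i| + |H_i|)`. -/
def sizeTA (Φ : Finset (Finset V × V)) : ℕ := sizeBA Φ + sizeC Φ
/-- (BC) bodies plus clauses `Σ_i (|H_i| + 1)`. -/
def sizeBC (Φ : Finset (Finset V × V)) : ℕ := sizeB Φ + sizeC Φ
/-- (L) number of literals `Σ_i (|B_i| + 1)·|H_i|`. -/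
def sizeL (Φ : Finset (Finset V × V)) : ℕ := ∑ c ∈ Φ, (c.1.card + 1)

/-- `μ` is one of the six size measures. -/
def IsMeasure (μ : Finset (Finset V × V) → ℕ) : Prop :=
  μ = sizeB ∨ μ = sizeBA ∨ μ = sizeTA ∨ μ = sizeC ∨ μ = sizeBC ∨ μ = sizeL

/-- `OPT_μ(𝓑)`: minimum `μ`-size of a CNF representing `h_𝓑`. -/
noncomputable def OPT (μ : Finset (Finset V × V) → ℕ) (𝓑 : Finset (Finset V)) : ℕ :=
  sInf {s : ℕ | ∃ Φ : Finset (Finset V × V), Represents 𝓑 Φ ∧ μ Φ = s}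

/-- `price_μ(S,T)`: minimum `μ`-size of a pure Horn CNF with bodies in `𝓑`
whose forward chaining from `S` reaches all of `T`. -/
noncomputable def price (μ : Finset (Finset V × V) → ℕ) (𝓑 : Finset (Finset V))
    (S T : Finset V) : ℕ :=
  sInf {s : ℕ | ∃ Φ : Finset (Finset V × V),
    PureHorn Φ ∧ (∀ c ∈ Φ, c.1 ∈ 𝓑) ∧ ↑T ⊆ hornClosure Φ ↑S ∧ μ Φ = s}

/-!
Any set closed under `Φ_{E'}` that contains one body contains the next one along the cycle,
hence every body and so all of `V`; this is exactly closedness under `Ψ_𝓑`, so `Φ_{E'}`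
represents `h_𝓑`. Conversely, by the Sperner property and `B ≠ V`, every `B ∈ 𝓑` must occur as a
body of every representation of `h_𝓑`. Hence `OPT_*(𝓑)` is at least the corresponding size of
`⋀_{B ∈ 𝓑} B → v_B`, while `Φ_{E'}` has the same bodies and at most `k` heads per body.
-/

section

variable {α : Type*}

theorem subset_hornClosure (Φ : Finset (Finset α × α)) (Z : Set α) : Z ⊆ hornClosure Φ Z :=
  fun _ hv => Set.mem_sInter.2 fun _ hW => hW.1 hv

theorem hornClosed_hornClosure (Φ : Finset (Finset α × α)) (Z : Set α) :
    HornClosed Φ (hornClosure Φ Z) :=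
  fun c hc hsub =>
    Set.mem_sInter.2 fun W hW => hW.2 c hc fun _ hx => Set.mem_sInter.1 (hsub hx) W hW

theorem hornClosure_subset {Φ : Finset (Finset α × α)} {Z W : Set α} (hZ : Z ⊆ W)
    (hW : HornClosed Φ W) : hornClosure Φ Z ⊆ W :=
  Set.sInter_subset_of_mem ⟨hZ, hW⟩

theorem hornClosure_eq_self {Φ : Finset (Finset α × α)} {Z : Set α} (hZ : HornClosed Φ Z) :
    hornClosure Φ Z = Z :=
  (hornClosure_subset subset_rfl hZ).antisymm (subset_hornClosure Φ Z)

theorem hornClosure_congr {Φ Ψ : Finset (Finset α × α)}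
    (h : ∀ W, HornClosed Φ W ↔ HornClosed Ψ W) : hornClosure Φ = hornClosure Ψ := by
  funext Z
  simp only [hornClosure, h]

/-- `⋀_{B ∈ 𝓑} B → H B`. -/
def bodyCNF [DecidableEq α] (𝓑 : Finset (Finset α)) (H : Finset α → Finset α) :
    Finset (Finset α × α) :=
  𝓑.biUnion fun B => (H B).image fun v => (B, v)

section bodyCNF

variable [DecidableEq α] {𝓑 : Finset (Finset α)} {H : Finset α → Finset α}

theorem keyCNF_eq_bodyCNF [Fintype α] : keyCNF 𝓑 = bodyCNF 𝓑 (univ \ ·) := rfl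

theorem mem_bodyCNF {c : Finset α × α} : c ∈ bodyCNF 𝓑 H ↔ c.1 ∈ 𝓑 ∧ c.2 ∈ H c.1 := by
  constructor
  · simp only [bodyCNF, mem_biUnion, mem_image]
    rintro ⟨B, hB, v, hv, rfl⟩
    exact ⟨hB, hv⟩
  · rintro ⟨hB, hv⟩
    exact mem_biUnion.2 ⟨c.1, hB, mem_image.2 ⟨c.2, hv, rfl⟩⟩

theorem pureHorn_bodyCNF (hne : ∀ B ∈ 𝓑, B.Nonempty) (hH : ∀ B ∈ 𝓑, ∀ v ∈ H B, v ∉ B) :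
    PureHorn (bodyCNF 𝓑 H) := fun _ hc =>
  have hc := mem_bodyCNF.1 hc
  ⟨hne _ hc.1, hH _ hc.1 _ hc.2⟩

theorem hornClosed_bodyCNF_iff {W : Set α} :
    HornClosed (bodyCNF 𝓑 H) W ↔ ∀ B ∈ 𝓑, ↑B ⊆ W → ↑(H B) ⊆ W := by
  constructor
  · exact fun hW B hB hBW v hv => hW (B, v) (mem_bodyCNF.2 ⟨hB, hv⟩) hBW
  · intro hW c hc hcW
    have hc := mem_bodyCNF.1 hc
    exact hW _ hc.1 hcW hc.2

theorem sum_bodyCNF {M : Type*} [AddCommMonoid M] (f : Finset α × α → M) :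
    ∑ c ∈ bodyCNF 𝓑 H, f c = ∑ B ∈ 𝓑, ∑ v ∈ H B, f (B, v) := by
  have hdisj : (𝓑 : Set (Finset α)).PairwiseDisjoint fun B => (H B).image fun v => (B, v) := by
    intro B _ B' _ hBB'
    simp only [Function.onFun, disjoint_left, mem_image]
    rintro _ ⟨v, -, rfl⟩ ⟨v', -, hv'⟩
    exact hBB' (congrArg Prod.fst hv').symm
  rw [bodyCNF, sum_biUnion hdisj]
  exact sum_congr rfl fun B _ => sum_image fun v _ v' _ h => congrArg Prod.snd h

theorem image_fst_bodyCNF_subset : (bodyCNF 𝓑 H).image Prod.fst ⊆ 𝓑 := by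
  intro B hB
  obtain ⟨c, hc, rfl⟩ := mem_image.1 hB
  exact (mem_bodyCNF.1 hc).1

theorem sizeC_bodyCNF_le {k : ℕ} (hH : ∀ B ∈ 𝓑, (H B).card ≤ k) :
    sizeC (bodyCNF 𝓑 H) ≤ k * 𝓑.card := by
  calc sizeC (bodyCNF 𝓑 H) = ∑ B ∈ 𝓑, (H B).card := by
        simp only [sizeC, card_eq_sum_ones, sum_bodyCNF]
    _ ≤ ∑ _B ∈ 𝓑, k := sum_le_sum hH
    _ = k * 𝓑.card := by rw [sum_const, smul_eq_mul, mul_comm]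

theorem sizeL_bodyCNF_le {k : ℕ} (hH : ∀ B ∈ 𝓑, (H B).card ≤ k) :
    sizeL (bodyCNF 𝓑 H) ≤ k * (∑ B ∈ 𝓑, B.card + 𝓑.card) := by
  calc sizeL (bodyCNF 𝓑 H) = ∑ B ∈ 𝓑, (H B).card * (B.card + 1) := by
        simp only [sizeL, sum_bodyCNF, sum_const, smul_eq_mul]
    _ ≤ ∑ B ∈ 𝓑, k * (B.card + 1) := sum_le_sum fun B hB => Nat.mul_le_mul_right _ (hH B hB)
    _ = k * (∑ B ∈ 𝓑, B.card + 𝓑.card) := by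
        rw [← mul_sum, sum_add_distrib, card_eq_sum_ones]

end bodyCNF

theorem sizeB_le_sizeC [DecidableEq α] (Φ : Finset (Finset α × α)) : sizeB Φ ≤ sizeC Φ :=
  card_image_le

theorem sizeBA_add_sizeB_le_sizeL [DecidableEq α] (Φ : Finset (Finset α × α)) :
    sizeBA Φ + sizeB Φ ≤ sizeL Φ := by
  rw [sizeBA, sizeB, card_eq_sum_ones, ← sum_add_distrib]
  exact sum_image_le_of_nonneg fun _ _ => Nat.zero_le _

theorem IsMeasure.bodyCNF_le_mul [DecidableEq α] {μ : Finset (Finset α × α) → ℕ}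
    (hμ : IsMeasure μ) {𝓑 : Finset (Finset α)} {H : Finset α → Finset α} {k : ℕ}
    {Ψ : Finset (Finset α × α)} (hne : ∀ B ∈ 𝓑, B.Nonempty) (hk : ∀ B ∈ 𝓑, B.card ≤ k)
    (hH : ∀ B ∈ 𝓑, (H B).card ≤ k) (hΨ : 𝓑 ⊆ Ψ.image Prod.fst) :
    μ (bodyCNF 𝓑 H) ≤ k * μ Ψ := by
  set m := 𝓑.card
  set s := ∑ B ∈ 𝓑, B.card
  have hkm : m ≤ k * m ∧ s ≤ k * s := by
    rcases 𝓑.eq_empty_or_nonempty with h | ⟨B, hB⟩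
    · simp [m, s, h]
    · have hk1 : 1 ≤ k := (card_pos.2 (hne B hB)).trans_le (hk B hB)
      exact ⟨Nat.le_mul_of_pos_left m hk1, Nat.le_mul_of_pos_left s hk1⟩
  have hB : sizeB (bodyCNF 𝓑 H) ≤ m := card_le_card image_fst_bodyCNF_subset
  have hBA : sizeBA (bodyCNF 𝓑 H) ≤ s := sum_le_sum_of_subset image_fst_bodyCNF_subset
  have hC := sizeC_bodyCNF_le hH
  have hL := sizeL_bodyCNF_le hH
  have hB' : m ≤ sizeB Ψ := card_le_card hΨ
  have hBA' : s ≤ sizeBA Ψ := sum_le_sum_of_subset hΨ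
  have hC' : m ≤ sizeC Ψ := hB'.trans (sizeB_le_sizeC Ψ)
  have hL' : s + m ≤ sizeL Ψ := (add_le_add hBA' hB').trans (sizeBA_add_sizeB_le_sizeL Ψ)
  rcases hμ with rfl | rfl | rfl | rfl | rfl | rfl
  · exact hB.trans (hkm.1.trans (Nat.mul_le_mul_left k hB'))
  · exact hBA.trans (hkm.2.trans (Nat.mul_le_mul_left k hBA'))
  · calc sizeTA (bodyCNF 𝓑 H) ≤ k * (s + m) := by
          rw [mul_add]; exact add_le_add (hBA.trans hkm.2) hC
      _ ≤ k * sizeTA Ψ := Nat.mul_le_mul_left k (add_le_add hBA' hC')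
  · exact hC.trans (Nat.mul_le_mul_left k hC')
  · calc sizeBC (bodyCNF 𝓑 H) ≤ k * (m + m) := by
          rw [mul_add]; exact add_le_add (hB.trans hkm.1) hC
      _ ≤ k * sizeBC Ψ := Nat.mul_le_mul_left k (add_le_add hB' hC')
  · exact hL.trans (Nat.mul_le_mul_left k hL')

theorem eq_univ_of_forall_subset_succ {𝓑 : Finset (Finset α)} {nxt : Finset α → Finset α}
    (hcover : ∀ v : α, ∃ B ∈ 𝓑, v ∈ B) (hmem : ∀ B ∈ 𝓑, nxt B ∈ 𝓑)
    (hham : ∀ B ∈ 𝓑, ∀ B' ∈ 𝓑, ∃ j : ℕ, nxt^[j] B = B')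
    {W : Set α} (hW : ∀ B ∈ 𝓑, ↑B ⊆ W → ↑(nxt B) ⊆ W) {B : Finset α} (hB : B ∈ 𝓑)
    (hBW : ↑B ⊆ W) : W = Set.univ := by
  have hiter : ∀ j, nxt^[j] B ∈ 𝓑 ∧ ↑(nxt^[j] B) ⊆ W := by
    intro j
    induction j with
    | zero => exact ⟨hB, hBW⟩
    | succ j ih =>
      rw [Function.iterate_succ_apply']
      exact ⟨hmem _ ih.1, hW _ ih.1 ih.2⟩
  refine Set.eq_univ_of_forall fun v => ?_
  obtain ⟨B', hB', hv⟩ := hcover v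
  obtain ⟨j, rfl⟩ := hham B hB B' hB'
  exact (hiter j).2 hv

section keyCNF

variable [Fintype α] [DecidableEq α] {𝓑 : Finset (Finset α)}

theorem hornClosed_keyCNF_iff {W : Set α} :
    HornClosed (keyCNF 𝓑) W ↔ ∀ B ∈ 𝓑, ↑B ⊆ W → W = Set.univ := by
  rw [keyCNF_eq_bodyCNF, hornClosed_bodyCNF_iff]
  refine forall₂_congr fun B _ => imp_congr_right fun hBW => ⟨fun h => ?_, fun h => ?_⟩
  · refine Set.eq_univ_of_forall fun v => ?_
    by_cases hv : v ∈ B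
    · exact hBW hv
    · exact h (by simp [hv])
  · simp [h]

theorem represents_bodyCNF_sdiff_succ {nxt : Finset α → Finset α} (hne : ∀ B ∈ 𝓑, B.Nonempty)
    (hcover : ∀ v : α, ∃ B ∈ 𝓑, v ∈ B) (hmem : ∀ B ∈ 𝓑, nxt B ∈ 𝓑)
    (hham : ∀ B ∈ 𝓑, ∀ B' ∈ 𝓑, ∃ j : ℕ, nxt^[j] B = B') :
    Represents 𝓑 (bodyCNF 𝓑 fun B => nxt B \ B) := by
  refine ⟨pureHorn_bodyCNF hne fun B _ v hv => (mem_sdiff.1 hv).2, fun Z => ?_⟩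
  refine congrFun (hornClosure_congr fun W => ?_) _
  rw [hornClosed_keyCNF_iff, hornClosed_bodyCNF_iff]
  constructor
  · intro hW B hB hBW
    refine eq_univ_of_forall_subset_succ hcover hmem hham (fun B' hB' hB'W v hv => ?_) hB hBW
    by_cases hvB' : v ∈ B'
    · exact hB'W hvB'
    · exact hW B' hB' hB'W (mem_sdiff.2 ⟨hv, hvB'⟩)
  · intro hW B hB hBW
    rw [hW B hB hBW]
    exact Set.subset_univ _

variable {Ψ : Finset (Finset α × α)}

theorem hornClosure_keyCNF_of_mem {B : Finset α} (hB : B ∈ 𝓑) :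
    hornClosure (keyCNF 𝓑) ↑B = Set.univ :=
  hornClosed_keyCNF_iff.1 (hornClosed_hornClosure _ _) B hB (subset_hornClosure _ _)

theorem exists_subset_fst_of_represents (hΨ : Represents 𝓑 Ψ) {c : Finset α × α} (hc : c ∈ Ψ) :
    ∃ B ∈ 𝓑, B ⊆ c.1 := by
  by_contra! h
  have hkey : hornClosure (keyCNF 𝓑) ↑c.1 = ↑c.1 :=
    hornClosure_eq_self <| hornClosed_keyCNF_iff.2 fun B hB hBc =>
      absurd (coe_subset.1 hBc) (h B hB)
  have hhead : c.2 ∈ hornClosure Ψ ↑c.1 :=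
    hornClosed_hornClosure Ψ _ c hc (subset_hornClosure _ _)
  rw [hΨ.2, hkey] at hhead
  exact (hΨ.1 c hc).2 hhead

theorem subset_image_fst_of_represents (hproper : ∀ B ∈ 𝓑, B ≠ Finset.univ)
    (hsperner : ∀ B ∈ 𝓑, ∀ B' ∈ 𝓑, B ⊆ B' → B = B') (hΨ : Represents 𝓑 Ψ) :
    𝓑 ⊆ Ψ.image Prod.fst := by
  intro B hB
  by_contra hbody
  have hclosed : HornClosed Ψ ↑B := by
    intro c hc hcB
    obtain ⟨B', hB', hB'c⟩ := exists_subset_fst_of_represents hΨ hc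
    have hB'B := hsperner B' hB' B hB (hB'c.trans (coe_subset.1 hcB))
    subst hB'B
    exact absurd (mem_image.2 ⟨c, hc, (coe_subset.1 hcB).antisymm hB'c⟩) hbody
  apply hproper B hB
  rw [← coe_inj, coe_univ, ← hornClosure_eq_self hclosed, hΨ.2, hornClosure_keyCNF_of_mem hB]

theorem exists_represents_eq_OPT (μ : Finset (Finset α × α) → ℕ) {Φ : Finset (Finset α × α)}
    (hΦ : Represents 𝓑 Φ) : ∃ Ψ, Represents 𝓑 Ψ ∧ μ Ψ = OPT μ 𝓑 :=
  Nat.sInf_mem (s := {s | ∃ Ψ, Represents 𝓑 Ψ ∧ μ Ψ = s}) ⟨_, Φ, hΦ, rfl⟩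

end keyCNF

end

theorem stmt4_general {V : Type*} [Fintype V] [DecidableEq V]
    (𝓑 : Finset (Finset V))
    (hne : ∀ B ∈ 𝓑, B.Nonempty) (hproper : ∀ B ∈ 𝓑, B ≠ Finset.univ)
    (hsperner : ∀ B ∈ 𝓑, ∀ B' ∈ 𝓑, B ⊆ B' → B = B')
    (hcover : ∀ v : V, ∃ B ∈ 𝓑, v ∈ B)
    (k : ℕ) (hk : ∀ B ∈ 𝓑, B.card ≤ k)
    (nxt : Finset V → Finset V)
    (hmem : ∀ B ∈ 𝓑, nxt B ∈ 𝓑)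
    (hham : ∀ B ∈ 𝓑, ∀ B' ∈ 𝓑, ∃ j : ℕ, nxt^[j] B = B')
    (Φ : Finset (Finset V × V))
    (hΦ : Φ = 𝓑.biUnion fun B => (nxt B \ B).image fun v => (B, v))
    (μ : Finset (Finset V × V) → ℕ) (hμ : IsMeasure μ) :
    Represents 𝓑 Φ ∧ μ Φ ≤ k * OPT μ 𝓑 := by
  have hΦ : Φ = bodyCNF 𝓑 fun B => nxt B \ B := hΦ
  have hrep : Represents 𝓑 Φ := hΦ ▸ represents_bodyCNF_sdiff_succ hne hcover hmem hham
  refine ⟨hrep, ?_⟩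
  obtain ⟨Ψ, hΨ, hΨopt⟩ := exists_represents_eq_OPT μ hrep
  rw [← hΨopt, hΦ]
  exact hμ.bodyCNF_le_mul hne hk
    (fun B hB => (card_le_card sdiff_subset).trans (hk _ (hmem B hB)))
    (subset_image_fst_of_represents hproper hsperner hΨ)

/-- If `E'` is the arc set of a Hamiltonian directed cycle in the body graph
(encoded by a successor map `nxt` acting on `𝓑` as a single full cycle), then
`Φ_{E'} = ⋀_{B ∈ 𝓑} B → (nxt B \ B)` represents `h_𝓑` and is a
`k`-approximation for every one of the six measures, `k` bounding the body
sizes. -/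
theorem stmt4 {V : Type*} [Fintype V] [DecidableEq V]
    (𝓑 : Finset (Finset V))
    (hne : ∀ B ∈ 𝓑, B.Nonempty) (hproper : ∀ B ∈ 𝓑, B ≠ Finset.univ)
    (hsperner : ∀ B ∈ 𝓑, ∀ B' ∈ 𝓑, B ⊆ B' → B = B')
    (hcover : ∀ v : V, ∃ B ∈ 𝓑, v ∈ B)
    (hinter : ∀ v : V, ∃ B ∈ 𝓑, v ∉ B)
    (k : ℕ) (hk : ∀ B ∈ 𝓑, B.card ≤ k)
    (nxt : Finset V → Finset V)
    (hmem : ∀ B ∈ 𝓑, nxt B ∈ 𝓑)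
    (hinj : ∀ B ∈ 𝓑, ∀ B' ∈ 𝓑, nxt B = nxt B' → B = B')
    (hham : ∀ B ∈ 𝓑, ∀ B' ∈ 𝓑, ∃ j : ℕ, nxt^[j] B = B')
    (Φ : Finset (Finset V × V))
    (hΦ : Φ = 𝓑.biUnion fun B => (nxt B \ B).image fun v => (B, v))
    (μ : Finset (Finset V × V) → ℕ) (hμ : IsMeasure μ) :
    Represents 𝓑 Φ ∧ μ Φ ≤ k * OPT μ 𝓑 :=
  stmt4_general 𝓑 hne hproper hsperner hcover k hk nxt hmem hham Φ hΦ μ hμ
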